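/- Polarization of functions is an L²-contraction of the symmetric decreasing structure in the following sense: if H is a closed half-space in ℝ^d with reflection σ_H and u, v : ℝ^d → ℝ are nonnegative and square integrable, then ‖P_H u − P_H v‖_{L²} ≤ ‖u − v‖_{L²}. -/

import Mathlib

open MeasureTheory

noncomputable section

variable {d : ℕ}

/-- The affine reflection `σ_H` across the boundary hyperplane of the closed
half-space `H = {x | ⟪x, a⟫ ≤ c}` (for `a ≠ 0`). -/
def reflH (a : EuclideanSpace ℝ (Fin d)) (c : ℝ) (x : EuclideanSpace ℝ (Fin d)) :
    EuclideanSpace ℝ (Fin d) :=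
  x - ((2 * ((inner ℝ x a : ℝ) - c)) / ‖a‖ ^ 2) • a

/-- The closed half-space `H = {x | ⟪x, a⟫ ≤ c}`. -/
def halfSpaceH (a : EuclideanSpace ℝ (Fin d)) (c : ℝ) : Set (EuclideanSpace ℝ (Fin d)) :=
  {x | (inner ℝ x a : ℝ) ≤ c}

/-- The polarization `P_H A = ((A ∪ A_H) ∩ H) ∪ (A ∩ A_H)` of a set `A`,
where `A_H = σ_H(A)`. -/
def polSet (a : EuclideanSpace ℝ (Fin d)) (c : ℝ) (A : Set (EuclideanSpace ℝ (Fin d))) :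
    Set (EuclideanSpace ℝ (Fin d)) :=
  ((A ∪ reflH a c '' A) ∩ halfSpaceH a c) ∪ (A ∩ reflH a c '' A)

open Classical in
/-- The polarization `P_H u` of a function: `max (u x) (u (σ_H x))` on `H`,
`min (u x) (u (σ_H x))` off `H`. -/
def polFun (a : EuclideanSpace ℝ (Fin d)) (c : ℝ) (u : EuclideanSpace ℝ (Fin d) → ℝ)
    (x : EuclideanSpace ℝ (Fin d)) : ℝ :=
  if x ∈ halfSpaceH a c then max (u x) (u (reflH a c x)) else min (u x) (u (reflH a c x))

/-!
Pair each point `x` with its mirror image `σ_H x`. On such a pair polarization replaces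
`(w x, w (σ_H x))` by their maximum and minimum (in some order), and for two pairs of reals
`(max s t - max p q)² + (min s t - min p q)² ≤ (s - p)² + (t - q)²`. Since `σ_H` preserves
Lebesgue measure, integrating this pairwise bound counts each side twice, which gives
`2 ‖P_H u - P_H v‖² ≤ 2 ‖u - v‖²`.
-/

open scoped ENNReal

namespace MeasureTheory.MeasurePreserving

variable {α : Type*} [MeasurableSpace α] {μ : Measure α} {T : α → α}

theorem lintegral_le_of_add_comp_le (hT : MeasurePreserving T μ μ) {f g : α → ℝ≥0∞}
    (hg : AEMeasurable g μ) (h : ∀ x, f x + f (T x) ≤ g x + g (T x)) :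
    ∫⁻ x, f x ∂μ ≤ ∫⁻ x, g x ∂μ := by
  -- Only `g` has to be measurable: both inequalities used for `f` below hold for all functions.
  have hgT : ∫⁻ x, g (T x) ∂μ = ∫⁻ x, g x ∂μ := by
    rw [← lintegral_map' (by rwa [hT.map_eq]) hT.measurable.aemeasurable, hT.map_eq]
  refine (ENNReal.mul_le_mul_iff_right two_ne_zero ENNReal.ofNat_ne_top).mp ?_
  calc 2 * ∫⁻ x, f x ∂μ = ∫⁻ x, f x ∂μ + ∫⁻ x, f x ∂(μ.map T) := by rw [hT.map_eq, two_mul]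
    _ ≤ ∫⁻ x, f x ∂μ + ∫⁻ x, f (T x) ∂μ := add_le_add_right (lintegral_map_le _ _) _
    _ ≤ ∫⁻ x, f x + f (T x) ∂μ := le_lintegral_add _ _
    _ ≤ ∫⁻ x, g x + g (T x) ∂μ := lintegral_mono h
    _ = 2 * ∫⁻ x, g x ∂μ := by rw [lintegral_add_left' hg, hgT, two_mul]

theorem eLpNorm_le_of_rpow_add_comp_le {E F : Type*} [NormedAddCommGroup E]
    [NormedAddCommGroup F] (hT : MeasurePreserving T μ μ) {p : ℝ≥0∞} (hp0 : p ≠ 0)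
    (hp : p ≠ ∞) {f : α → E} {g : α → F} (hg : AEStronglyMeasurable g μ)
    (h : ∀ x, ‖f x‖ ^ p.toReal + ‖f (T x)‖ ^ p.toReal ≤ ‖g x‖ ^ p.toReal + ‖g (T x)‖ ^ p.toReal) :
    eLpNorm f p μ ≤ eLpNorm g p μ := by
  simp only [eLpNorm_eq_lintegral_rpow_enorm_toReal hp0 hp]
  gcongr ?_ ^ _
  refine hT.lintegral_le_of_add_comp_le (hg.enorm.pow_const _) fun x => ?_
  simp only [← ofReal_norm, ENNReal.ofReal_rpow_of_nonneg (norm_nonneg _) ENNReal.toReal_nonneg]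
  rw [← ENNReal.ofReal_add (by positivity) (by positivity),
    ← ENNReal.ofReal_add (by positivity) (by positivity)]
  exact ENNReal.ofReal_le_ofReal (h x)

end MeasureTheory.MeasurePreserving

theorem max_sub_max_sq_add_min_sub_min_sq_le (s t p q : ℝ) :
    (max s t - max p q) ^ 2 + (min s t - min p q) ^ 2 ≤ (s - p) ^ 2 + (t - q) ^ 2 := by
  rcases le_total s t with hst | hst <;> rcases le_total p q with hpq | hpq <;>
    simp only [max_eq_left, max_eq_right, min_eq_left, min_eq_right, hst, hpq] <;>
    nlinarith

section Reflection

variable {a : EuclideanSpace ℝ (Fin d)} {c : ℝ}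

theorem inner_reflH (ha : a ≠ 0) (x : EuclideanSpace ℝ (Fin d)) :
    inner ℝ (reflH a c x) a = 2 * c - inner ℝ x a := by
  have : ‖a‖ ^ 2 ≠ 0 := by positivity
  simp only [reflH, inner_sub_left, real_inner_smul_left, real_inner_self_eq_norm_sq]
  field_simp
  ring

theorem reflH_eq_self {x : EuclideanSpace ℝ (Fin d)} (hx : inner ℝ x a = c) :
    reflH a c x = x := by
  simp [reflH, hx]

theorem reflH_reflH (ha : a ≠ 0) (x : EuclideanSpace ℝ (Fin d)) :
    reflH a c (reflH a c x) = x := by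
  have : ‖a‖ ^ 2 ≠ 0 := by positivity
  rw [reflH, inner_reflH ha, reflH, sub_sub, ← add_smul]
  convert sub_zero x using 2
  rw [smul_eq_zero]
  left
  field_simp
  ring

theorem reflH_mem_halfSpaceH (ha : a ≠ 0) {x : EuclideanSpace ℝ (Fin d)}
    (hx : x ∉ halfSpaceH a c) : reflH a c x ∈ halfSpaceH a c := by
  simp only [halfSpaceH, Set.mem_ofPred_eq, not_le, inner_reflH ha] at hx ⊢
  linarith

theorem reflH_eq_self_of_mem (ha : a ≠ 0) {x : EuclideanSpace ℝ (Fin d)}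
    (hx : x ∈ halfSpaceH a c) (hx' : reflH a c x ∈ halfSpaceH a c) : reflH a c x = x := by
  simp only [halfSpaceH, Set.mem_ofPred_eq, inner_reflH ha] at hx hx'
  exact reflH_eq_self (by linarith)

theorem measurePreserving_reflH : MeasurePreserving (reflH a c) volume volume := by
  have hrefl : reflH a c = (· + (2 * c / ‖a‖ ^ 2) • a) ∘ (ℝ ∙ a)ᗮ.reflection := by
    funext x
    simp only [Function.comp_apply, Submodule.reflection_apply,
      Submodule.starProjection_orthogonal_val, Submodule.starProjection_singleton, reflH,
      real_inner_comm a x]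
    module
  rw [hrefl]
  exact (measurePreserving_add_right volume _).comp (ℝ ∙ a)ᗮ.reflection.measurePreserving

end Reflection

section Polarization

variable {a : EuclideanSpace ℝ (Fin d)} {c : ℝ} {x : EuclideanSpace ℝ (Fin d)}

theorem polFun_of_mem (u : EuclideanSpace ℝ (Fin d) → ℝ) (hx : x ∈ halfSpaceH a c) :
    polFun a c u x = max (u x) (u (reflH a c x)) :=
  if_pos hx

-- On the boundary hyperplane `x = σ_H x`, so the maximum there is also the minimum.
theorem polFun_reflH_of_mem (ha : a ≠ 0) (u : EuclideanSpace ℝ (Fin d) → ℝ)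
    (hx : x ∈ halfSpaceH a c) : polFun a c u (reflH a c x) = min (u x) (u (reflH a c x)) := by
  by_cases hx' : reflH a c x ∈ halfSpaceH a c
  · have hfix := reflH_eq_self_of_mem ha hx hx'
    rw [polFun_of_mem u hx', hfix, hfix, max_self, min_self]
  · rw [polFun, if_neg hx', reflH_reflH ha, min_comm]

theorem polFun_sub_sq_add_le_of_mem (ha : a ≠ 0) (u v : EuclideanSpace ℝ (Fin d) → ℝ)
    (hx : x ∈ halfSpaceH a c) :
    (polFun a c u x - polFun a c v x) ^ 2
        + (polFun a c u (reflH a c x) - polFun a c v (reflH a c x)) ^ 2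
      ≤ (u x - v x) ^ 2 + (u (reflH a c x) - v (reflH a c x)) ^ 2 := by
  rw [polFun_of_mem u hx, polFun_of_mem v hx, polFun_reflH_of_mem ha u hx,
    polFun_reflH_of_mem ha v hx]
  exact max_sub_max_sq_add_min_sub_min_sq_le _ _ _ _

theorem polFun_sub_sq_add_le (ha : a ≠ 0) (u v : EuclideanSpace ℝ (Fin d) → ℝ)
    (x : EuclideanSpace ℝ (Fin d)) :
    (polFun a c u x - polFun a c v x) ^ 2
        + (polFun a c u (reflH a c x) - polFun a c v (reflH a c x)) ^ 2
      ≤ (u x - v x) ^ 2 + (u (reflH a c x) - v (reflH a c x)) ^ 2 := by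
  by_cases hx : x ∈ halfSpaceH a c
  · exact polFun_sub_sq_add_le_of_mem ha u v hx
  · have hmirror := polFun_sub_sq_add_le_of_mem ha u v (reflH_mem_halfSpaceH ha hx)
    rw [reflH_reflH ha] at hmirror
    linarith

end Polarization

theorem polFun_L2_contraction_general (a : EuclideanSpace ℝ (Fin d)) (c : ℝ) (ha : a ≠ 0)
    (u v : EuclideanSpace ℝ (Fin d) → ℝ)
    (hu : MemLp u 2 (volume : Measure (EuclideanSpace ℝ (Fin d))))
    (hv : MemLp v 2 (volume : Measure (EuclideanSpace ℝ (Fin d)))) :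
    eLpNorm (fun x => polFun a c u x - polFun a c v x) 2
        (volume : Measure (EuclideanSpace ℝ (Fin d))) ≤
      eLpNorm (fun x => u x - v x) 2 (volume : Measure (EuclideanSpace ℝ (Fin d))) := by
  refine (measurePreserving_reflH (a := a) (c := c)).eLpNorm_le_of_rpow_add_comp_le
    two_ne_zero ENNReal.ofNat_ne_top (hu.aestronglyMeasurable.sub hv.aestronglyMeasurable)
    fun x => ?_
  simpa only [ENNReal.toReal_ofNat, Real.rpow_two, Real.norm_eq_abs, sq_abs]
    using polFun_sub_sq_add_le ha u v x

/-- Polarization is an `L²`-contraction: for nonnegative square-integrable `u, v`,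
`‖P_H u − P_H v‖_{L²} ≤ ‖u − v‖_{L²}`. -/
theorem polFun_L2_contraction (a : EuclideanSpace ℝ (Fin d)) (c : ℝ) (ha : a ≠ 0)
    (u v : EuclideanSpace ℝ (Fin d) → ℝ) (hu0 : ∀ x, 0 ≤ u x) (hv0 : ∀ x, 0 ≤ v x)
    (hu : MemLp u 2 (volume : Measure (EuclideanSpace ℝ (Fin d))))
    (hv : MemLp v 2 (volume : Measure (EuclideanSpace ℝ (Fin d)))) :
    eLpNorm (fun x => polFun a c u x - polFun a c v x) 2
        (volume : Measure (EuclideanSpace ℝ (Fin d))) ≤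
      eLpNorm (fun x => u x - v x) 2 (volume : Measure (EuclideanSpace ℝ (Fin d))) :=
  polFun_L2_contraction_general a c ha u v hu hv
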